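/- Let Z, U be Hilbert spaces, T(t) a strongly continuous semigroup on Z, B : U → Z bounded linear, and suppose the controllability map G_{τδ} u = ∫_{τ−δ}^{τ} T(τ−s) B u(s) ds has dense range for every 0 < δ < τ. Let z : [0,τ] → Z and perturbation data be such that for a fixed control u on [0, τ−δ] the mild solution z^{δ,α} with terminal control u_α satisfies ‖z^{δ,α}(τ) − y^{δ,α}(τ)‖ ≤ δ · C(K, a, b, ρ, M) for a constant independent of α, where y^{δ,α}(τ) = T(δ) z(τ−δ) + G_{τδ} u_α and u_α = G*_{τδ}(αI + Q_{τδ})^{-1}(z_1 − T(δ) z(τ−δ)). Then for every ε > 0 there exist δ > 0 and α > 0 such that ‖z^{δ,α}(τ) − z_1‖ < ε. -/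

import Mathlib

open scoped InnerProductSpace Topology

/-!
Write `Q = G G*`, a positive operator whose range is dense because `ker Q = ker G* = (range G)ᗮ`,
and `v = z₁ - T(δ) z(τ - δ)`. Then `y^{δ,α}(τ) - z₁ = Q (αI + Q)⁻¹ v - v = -α (αI + Q)⁻¹ v`.
Positivity gives `‖α (αI + Q)⁻¹‖ ≤ 1`, and on the range of `Q` one has
`α (αI + Q)⁻¹ Q w = α (w - α (αI + Q)⁻¹ w) = O(α)`; by density `α (αI + Q)⁻¹ v → 0` as `α → 0⁺`.
So first choose `δ` with `δ C < ε / 2`, then `α` with `‖α (αI + Q)⁻¹ v‖ < ε / 2`.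
-/

open scoped InnerProduct
open Filter

namespace ContinuousLinearMap

section DenseRange

variable {𝕜 E F : Type*} [RCLike 𝕜] [NormedAddCommGroup E] [InnerProductSpace 𝕜 E] [CompleteSpace E]
  [NormedAddCommGroup F] [InnerProductSpace 𝕜 F] [CompleteSpace F]

theorem denseRange_iff_ker_adjoint_eq_bot (T : E →L[𝕜] F) : DenseRange T ↔ T†.ker = ⊥ := by
  rw [← orthogonal_range, ← Submodule.topologicalClosure_eq_top_iff,
    ← Submodule.dense_iff_topologicalClosure_eq_top]
  rfl

theorem denseRange_self_comp_adjoint {T : E →L[𝕜] F} (hT : DenseRange T) :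
    DenseRange (T ∘L T†) := by
  rw [denseRange_iff_ker_adjoint_eq_bot] at hT ⊢
  rwa [adjoint_comp, adjoint_adjoint, ker_self_comp_adjoint]

end DenseRange

section Resolvent

variable {E : Type*} [NormedAddCommGroup E] [InnerProductSpace ℝ E] {Q R : E →L[ℝ] E} {α : ℝ}

theorem IsPositive.mul_norm_le_norm_smul_add_apply (hQ : Q.IsPositive) (α : ℝ) (x : E) :
    α * ‖x‖ ≤ ‖α • x + Q x‖ := by
  rcases (norm_nonneg x).eq_or_lt with hx | hx
  · simp [← hx]
  refine le_of_mul_le_mul_right ?_ hx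
  calc α * ‖x‖ * ‖x‖ = ⟪α • x, x⟫_ℝ := by
        rw [real_inner_smul_left, real_inner_self_eq_norm_mul_norm, mul_assoc]
    _ ≤ ⟪α • x + Q x, x⟫_ℝ := by
        rw [inner_add_left]
        linarith [hQ.inner_nonneg_left x]
    _ ≤ ‖α • x + Q x‖ * ‖x‖ := real_inner_le_norm _ _

theorem apply_apply_eq_sub_smul_of_add_comp_eq_one (hR : (α • 1 + Q) ∘L R = 1) (v : E) :
    Q (R v) = v - α • R v :=
  eq_sub_of_add_eq' (by simpa using congr($hR v))

theorem apply_apply_eq_sub_smul_of_comp_add_eq_one (hR : R ∘L (α • 1 + Q) = 1) (w : E) :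
    R (Q w) = w - α • R w :=
  eq_sub_of_add_eq' (by simpa using congr($hR w))

theorem IsPositive.norm_smul_apply_le_of_add_comp_eq_one (hQ : Q.IsPositive) (hα : 0 ≤ α)
    (hR : (α • 1 + Q) ∘L R = 1) (y : E) : ‖α • R y‖ ≤ ‖y‖ := by
  simpa [norm_smul, abs_of_nonneg hα, apply_apply_eq_sub_smul_of_add_comp_eq_one hR]
    using hQ.mul_norm_le_norm_smul_add_apply α (R y)

theorem IsPositive.norm_smul_apply_le (hQ : Q.IsPositive) (hα : 0 ≤ α)
    (hRl : R ∘L (α • 1 + Q) = 1) (hRr : (α • 1 + Q) ∘L R = 1) (v w : E) :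
    ‖α • R v‖ ≤ ‖v - Q w‖ + 2 * α * ‖w‖ := by
  have hsplit : α • R v = α • R (v - Q w) + (α • w - α • (α • R w)) := by
    rw [← smul_sub, ← apply_apply_eq_sub_smul_of_comp_add_eq_one hRl, ← smul_add, ← map_add,
      sub_add_cancel]
  have hαRw : ‖α • (α • R w)‖ ≤ α * ‖w‖ := by
    rw [norm_smul, Real.norm_of_nonneg hα]
    exact mul_le_mul_of_nonneg_left (hQ.norm_smul_apply_le_of_add_comp_eq_one hα hRr w) hα
  calc ‖α • R v‖ ≤ ‖α • R (v - Q w)‖ + (‖α • w‖ + ‖α • (α • R w)‖) := by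
        rw [hsplit]; exact (norm_add_le _ _).trans (by gcongr; exact norm_sub_le _ _)
    _ ≤ ‖v - Q w‖ + (α * ‖w‖ + α * ‖w‖) := by
        rw [norm_smul _ w, Real.norm_of_nonneg hα]
        exact add_le_add (hQ.norm_smul_apply_le_of_add_comp_eq_one hα hRr _) (by gcongr)
    _ = ‖v - Q w‖ + 2 * α * ‖w‖ := by ring

theorem IsPositive.tendsto_smul_resolvent_nhdsGT_zero (hQ : Q.IsPositive) (hdense : DenseRange Q)
    {R : ℝ → E →L[ℝ] E}
    (hR : ∀ α > 0, R α ∘L (α • 1 + Q) = 1 ∧ (α • 1 + Q) ∘L R α = 1) (v : E) :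
    Tendsto (fun α ↦ α • R α v) (𝓝[>] 0) (𝓝 0) := by
  rw [Metric.tendsto_nhdsWithin_nhds]
  intro ε hε
  obtain ⟨_, ⟨w, rfl⟩, hw⟩ := Metric.mem_closure_iff.mp (hdense v) (ε / 2) (half_pos hε)
  refine ⟨ε / (4 * (‖w‖ + 1)), by positivity, fun α (hα : 0 < α) hαε ↦ ?_⟩
  rw [dist_zero_right]
  rw [Real.dist_0_eq_abs, abs_of_pos hα, lt_div_iff₀ (by positivity)] at hαε
  rw [dist_eq_norm] at hw
  calc ‖α • R α v‖ ≤ ‖v - Q w‖ + 2 * α * ‖w‖ :=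
        hQ.norm_smul_apply_le hα.le (hR α hα).1 (hR α hα).2 v w
    _ < ε := by nlinarith [norm_nonneg w]

end Resolvent

end ContinuousLinearMap

open ContinuousLinearMap in
/-- Triangle-inequality argument for the main theorem: if for each
0 < δ < τ the controllability map G_δ has dense range, (αI + Q_δ)⁻¹ = R δ α,
y^{δ,α}(τ) = T(δ) z(τ−δ) + G_δ u_α with u_α = G_δ*(αI+Q_δ)⁻¹(z₁ − T(δ)z(τ−δ)),
and ‖z^{δ,α}(τ) − y^{δ,α}(τ)‖ ≤ δ·C uniformly in α, then for every ε > 0 there are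
δ > 0 and α > 0 with ‖z^{δ,α}(τ) − z₁‖ < ε. -/
theorem approximate_controllability_abstract
    {H Z : Type*} [NormedAddCommGroup H] [InnerProductSpace ℝ H] [CompleteSpace H]
    [NormedAddCommGroup Z] [InnerProductSpace ℝ Z] [CompleteSpace Z]
    (T : ℝ → Z →L[ℝ] Z) (τ : ℝ) (hτ : 0 < τ)
    (Gop : ℝ → H →L[ℝ] Z)
    (hdense : ∀ δ ∈ Set.Ioo (0 : ℝ) τ, DenseRange (Gop δ))
    (R : ℝ → ℝ → Z →L[ℝ] Z)
    (hR : ∀ δ ∈ Set.Ioo (0 : ℝ) τ, ∀ α : ℝ, 0 < α →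
      (R δ α) ∘L (α • (1 : Z →L[ℝ] Z) + Gop δ ∘L ContinuousLinearMap.adjoint (Gop δ)) = 1 ∧
      (α • (1 : Z →L[ℝ] Z) + Gop δ ∘L ContinuousLinearMap.adjoint (Gop δ)) ∘L (R δ α) = 1)
    (z : ℝ → Z) (z₁ : Z) (zsol : ℝ → ℝ → Z) (C : ℝ)
    (hbound : ∀ δ ∈ Set.Ioo (0 : ℝ) τ, ∀ α : ℝ, 0 < α →
      ‖zsol δ α -
        (T δ (z (τ - δ)) +
          Gop δ (ContinuousLinearMap.adjoint (Gop δ)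
            (R δ α (z₁ - T δ (z (τ - δ))))))‖ ≤ δ * C) :
    ∀ ε : ℝ, 0 < ε → ∃ δ > (0 : ℝ), ∃ α > (0 : ℝ), ‖zsol δ α - z₁‖ < ε := by
  intro ε hε
  obtain ⟨δ, hδC, hδ⟩ : ∃ δ, δ * C < ε / 2 ∧ δ ∈ Set.Ioo 0 τ :=
    (((tendsto_id.mul_const C).mono_left nhdsWithin_le_nhds).eventually
      (gt_mem_nhds (by simpa using half_pos hε))).and (Ioo_mem_nhdsGT hτ) |>.exists
  set v := z₁ - T δ (z (τ - δ)) with hv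
  have hlim := (isPositive_self_comp_adjoint (Gop δ)).tendsto_smul_resolvent_nhdsGT_zero
    (denseRange_self_comp_adjoint (hdense δ hδ)) (hR δ hδ) v
  obtain ⟨α, hαv, hα⟩ : ∃ α, ‖α • R δ α v‖ < ε / 2 ∧ 0 < α :=
    (hlim.norm.eventually (gt_mem_nhds (by simpa using half_pos hε))).and self_mem_nhdsWithin |>.exists
  have hsteer : T δ (z (τ - δ)) + Gop δ (adjoint (Gop δ) (R δ α v)) - z₁ = -(α • R δ α v) := by
    rw [← comp_apply (Gop δ), apply_apply_eq_sub_smul_of_add_comp_eq_one (hR δ hδ α hα).2, hv]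
    abel
  refine ⟨δ, hδ.1, α, hα, ?_⟩
  calc ‖zsol δ α - z₁‖
      ≤ ‖zsol δ α - (T δ (z (τ - δ)) + Gop δ (adjoint (Gop δ) (R δ α v)))‖
        + ‖T δ (z (τ - δ)) + Gop δ (adjoint (Gop δ) (R δ α v)) - z₁‖ :=
          norm_sub_le_norm_sub_add_norm_sub _ _ _
    _ < ε / 2 + ε / 2 := by
        rw [hsteer, norm_neg]
        exact add_lt_add_of_le_of_lt ((hbound δ hδ α hα).trans hδC.le) hαv
    _ = ε := add_halves ε
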